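/- arXiv:1811.01061 — 3 statements merged into one kernel-verified Lean document; each statement's English description precedes it below -/
import Mathlib

section
/- For all s ≥ r ≥ 0, I_∞(g, s) ≤ I_∞(g, r) ≤ ( I_∞(g, s)^{1/2} + ‖k‖_diag^{1/2} (s − r) )². -/
open Real
open scoped RealInnerProductSpace

/-!
Shrinking an element `h` of the `s`-ball radially onto the `r`-ball moves it by at most `s - r`,
and the reproducing property with `‖Φ x‖² = k x x` makes the sup-norm error `h ↦ ‖h - g‖_∞`
Lipschitz with constant `‖k‖_diag^{1/2}`. Hence the unsquared error on the `r`-ball exceeds the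
one on the `s`-ball by at most `‖k‖_diag^{1/2} (s - r)`.
-/

section Ball

variable {H : Type*} [NormedAddCommGroup H]

noncomputable def ballApproxError (f : H → ℝ) (r : ℝ) : ℝ :=
  sInf {c : ℝ | ∃ h : H, ‖h‖ ≤ r ∧ c = f h ^ 2}

variable {f : H → ℝ} {r s : ℝ}

theorem bddBelow_ballApproxError_set (f : H → ℝ) (r : ℝ) :
    BddBelow {c : ℝ | ∃ h : H, ‖h‖ ≤ r ∧ c = f h ^ 2} :=
  ⟨0, by rintro _ ⟨h, -, rfl⟩; positivity⟩

theorem ballApproxError_set_nonempty (f : H → ℝ) (hr : 0 ≤ r) :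
    {c : ℝ | ∃ h : H, ‖h‖ ≤ r ∧ c = f h ^ 2}.Nonempty :=
  ⟨_, 0, by simpa using hr, rfl⟩

theorem ballApproxError_le {h : H} (hh : ‖h‖ ≤ r) : ballApproxError f r ≤ f h ^ 2 :=
  csInf_le (bddBelow_ballApproxError_set f r) ⟨h, hh, rfl⟩

theorem sq_le_ballApproxError {t : ℝ} (hr : 0 ≤ r) (ht : 0 ≤ t)
    (hle : ∀ h : H, ‖h‖ ≤ r → t ≤ f h) : t ^ 2 ≤ ballApproxError f r := by
  refine le_csInf (ballApproxError_set_nonempty f hr) ?_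
  rintro _ ⟨h, hh, rfl⟩
  exact pow_le_pow_left₀ ht (hle h hh) 2

theorem ballApproxError_nonneg (f : H → ℝ) (hr : 0 ≤ r) : 0 ≤ ballApproxError f r :=
  le_csInf (ballApproxError_set_nonempty f hr) (by rintro _ ⟨h, -, rfl⟩; positivity)

theorem ballApproxError_antitone (hr : 0 ≤ r) (hrs : r ≤ s) :
    ballApproxError f s ≤ ballApproxError f r := by
  refine csInf_le_csInf (bddBelow_ballApproxError_set f s) (ballApproxError_set_nonempty f hr) ?_
  rintro _ ⟨h, hh, rfl⟩
  exact ⟨h, hh.trans hrs, rfl⟩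

variable [NormedSpace ℝ H]

theorem exists_norm_le_norm_sub_le_sub (hr : 0 ≤ r) (hrs : r ≤ s) {h : H}
    (hh : ‖h‖ ≤ s) : ∃ h' : H, ‖h'‖ ≤ r ∧ ‖h - h'‖ ≤ s - r := by
  rcases le_or_gt ‖h‖ r with hhr | hhr
  · exact ⟨h, hhr, by simpa using hrs⟩
  have hpos : 0 < ‖h‖ := hr.trans_lt hhr
  refine ⟨(r / ‖h‖) • h, ?_, ?_⟩
  · rw [norm_smul, Real.norm_of_nonneg (by positivity), div_mul_cancel₀ r hpos.ne']
  · have hcoef : 0 ≤ 1 - r / ‖h‖ := sub_nonneg.mpr ((div_le_one hpos).mpr hhr.le)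
    have hdiff : h - (r / ‖h‖) • h = (1 - r / ‖h‖) • h := by rw [sub_smul, one_smul]
    rw [hdiff, norm_smul, Real.norm_of_nonneg hcoef, sub_mul, one_mul,
      div_mul_cancel₀ r hpos.ne']
    linarith

theorem sqrt_ballApproxError_le_add {L : ℝ} (hf₀ : ∀ h, 0 ≤ f h)
    (hf : ∀ h h', f h' ≤ f h + L * ‖h - h'‖) (hL : 0 ≤ L) (hr : 0 ≤ r) (hrs : r ≤ s) :
    √(ballApproxError f r) ≤ √(ballApproxError f s) + L * (s - r) := by
  have hshrink : ∀ h : H, ‖h‖ ≤ s → √(ballApproxError f r) - L * (s - r) ≤ f h := by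
    intro h hh
    obtain ⟨h', hh'r, hhh'⟩ := exists_norm_le_norm_sub_le_sub hr hrs hh
    calc √(ballApproxError f r) - L * (s - r)
        ≤ √(f h' ^ 2) - L * ‖h - h'‖ := by
          gcongr
          exact ballApproxError_le hh'r
      _ = f h' - L * ‖h - h'‖ := by rw [Real.sqrt_sq (hf₀ h')]
      _ ≤ f h := by linarith [hf h h']
  rcases le_or_gt (√(ballApproxError f r) - L * (s - r)) 0 with hneg | hpos
  · linarith [Real.sqrt_nonneg (ballApproxError f s)]
  · have := Real.sqrt_le_sqrt (sq_le_ballApproxError (hr.trans hrs) hpos.le hshrink)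
    rw [Real.sqrt_sq hpos.le] at this
    linarith

theorem ballApproxError_le_sq_sqrt_add {L : ℝ} (hf₀ : ∀ h, 0 ≤ f h)
    (hf : ∀ h h', f h' ≤ f h + L * ‖h - h'‖) (hL : 0 ≤ L) (hr : 0 ≤ r) (hrs : r ≤ s) :
    ballApproxError f r ≤ (√(ballApproxError f s) + L * (s - r)) ^ 2 := by
  rw [← Real.sq_sqrt (ballApproxError_nonneg f hr)]
  exact pow_le_pow_left₀ (Real.sqrt_nonneg _) (sqrt_ballApproxError_le_add hf₀ hf hL hr hrs) 2

end Ball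

section Kernel

variable {S H : Type*} [NormedAddCommGroup H] [InnerProductSpace ℝ H] {Φ : S → H} {g : S → ℝ}
  {C : ℝ}

noncomputable def supError (Φ : S → H) (g : S → ℝ) (h : H) : ℝ :=
  ⨆ x, |⟪h, Φ x⟫ - g x|

theorem supError_nonneg (h : H) : 0 ≤ supError Φ g h :=
  Real.iSup_nonneg fun _ => abs_nonneg _

theorem bddAbove_range_abs_inner_sub (hΦ : ∀ x, ‖Φ x‖ ≤ C) (hg : ∃ M, ∀ x, |g x| ≤ M) (h : H) :
    BddAbove (Set.range fun x => |⟪h, Φ x⟫ - g x|) := by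
  obtain ⟨M, hM⟩ := hg
  refine ⟨‖h‖ * C + M, ?_⟩
  rintro _ ⟨x, rfl⟩
  calc |⟪h, Φ x⟫ - g x| ≤ |⟪h, Φ x⟫| + |g x| := abs_sub _ _
    _ ≤ ‖h‖ * C + M := by
      gcongr
      · exact (abs_real_inner_le_norm _ _).trans (by gcongr; exact hΦ x)
      · exact hM x

theorem supError_le_add (hC : 0 ≤ C) (hΦ : ∀ x, ‖Φ x‖ ≤ C) (hg : ∃ M, ∀ x, |g x| ≤ M) (h h' : H) :
    supError Φ g h' ≤ supError Φ g h + C * ‖h - h'‖ := by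
  refine Real.iSup_le (fun x => ?_) (add_nonneg (supError_nonneg h) (by positivity))
  have hsplit : ⟪h', Φ x⟫ - g x = (⟪h, Φ x⟫ - g x) - ⟪h - h', Φ x⟫ := by
    rw [inner_sub_left]; ring
  calc |⟪h', Φ x⟫ - g x| ≤ |⟪h, Φ x⟫ - g x| + |⟪h - h', Φ x⟫| := by
        rw [hsplit]; exact abs_sub _ _
    _ ≤ supError Φ g h + ‖h - h'‖ * C := by
        gcongr
        · exact le_ciSup (bddAbove_range_abs_inner_sub hΦ hg h) x
        · exact (abs_real_inner_le_norm _ _).trans (by gcongr; exact hΦ x)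
    _ = supError Φ g h + C * ‖h - h'‖ := by ring

end Kernel

/-- Lemma `lApprox`: for a fixed RKHS `H` on `S` with bounded
kernel `k` (feature map `Φ`, reproducing property `h(x) = ⟪h, Φ x⟫`), a bounded
function `g`, and the approximation error
`I_∞(g, r) = inf { ‖h − g‖_∞² : h ∈ r B_H }`:  for all `s ≥ r ≥ 0`,
`I_∞(g, s) ≤ I_∞(g, r) ≤ (I_∞(g, s)^{1/2} + ‖k‖_diag^{1/2} (s − r))²`. -/
theorem stmt_3
    {S H : Type*} [NormedAddCommGroup H] [InnerProductSpace ℝ H]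
    (k : S → S → ℝ) (Φ : S → H)
    (hkrepr : ∀ x y : S, k x y = ⟪Φ x, Φ y⟫)
    (hkbdd : BddAbove (Set.range fun x => k x x))
    (g : S → ℝ) (hgbdd : ∃ M : ℝ, ∀ x, |g x| ≤ M)
    (I : ℝ → ℝ)
    (hI : ∀ r : ℝ, I r =
      sInf {c : ℝ | ∃ h : H, ‖h‖ ≤ r ∧ c = (⨆ x, |(⟪h, Φ x⟫ : ℝ) - g x|) ^ 2}) :
    ∀ r s : ℝ, 0 ≤ r → r ≤ s →
      I s ≤ I r ∧ I r ≤ (Real.sqrt (I s) + Real.sqrt (⨆ x, k x x) * (s - r)) ^ 2 := by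
  intro r s hr hrs
  obtain rfl : I = ballApproxError (supError Φ g) := funext hI
  have hΦ : ∀ x, ‖Φ x‖ ≤ √(⨆ x, k x x) := fun x => by
    rw [← Real.sqrt_sq (norm_nonneg _), ← real_inner_self_eq_norm_sq, ← hkrepr]
    exact Real.sqrt_le_sqrt (le_ciSup hkbdd x)
  exact ⟨ballApproxError_antitone hr hrs,
    ballApproxError_le_sq_sqrt_add supError_nonneg
      (supError_le_add (Real.sqrt_nonneg _) hΦ hgbdd) (Real.sqrt_nonneg _) hr hrs⟩
end

section
/- Let S ⊆ ℝ^d and for γ > 0 define f_γ : S × S → ℝ by f_γ(x₁, x₂) = exp(−‖x₁ − x₂‖₂² / γ²). Then: (i) for all γ ≥ η > 0, sup_phantom ‖f_γ − f_η‖_∞ = sup_{x₁,x₂ ∈ S} |f_γ(x₁,x₂) − f_η(x₁,x₂)| ≤ (γ² − η²)^{1/2} / γ; (ii) for v ≥ u > 0, Γ ⊆ [u, v] non-empty, ℒ = { f_γ : γ ∈ Γ } ∪ {0}, and a ∈ (0,1), the minimal cardinality N(a, ℒ, ‖·‖_∞) of an a-cover of ℒ in the supremum norm satisfies N(a, ℒ,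 ‖·‖_∞) ≤ log(v/u) a^{−2} + 2; and (iii) for a ≥ 1, N(a, ℒ, ‖·‖_∞) = 1. -/
open Real

/-- Supremum distance between two real-valued functions. -/
noncomputable def supd {α : Type*} (f g : α → ℝ) : ℝ := ⨆ p, |f p - g p|

/-- `coverNum dd a L` is the minimal cardinality of an `a`-cover of `L` with respect
to the distance `dd` (a finite subset `F ⊆ L` all of whose closed `a`-balls cover `L`). -/
noncomputable def coverNum {α : Type*} (dd : α → α → ℝ) (a : ℝ) (L : Set α) : ℕ :=
  sInf {m : ℕ | ∃ F : Finset α, F.card = m ∧ ↑F ⊆ L ∧ ∀ x ∈ L, ∃ y ∈ F, dd x y ≤ a}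


lemma exp_conv (c s : ℝ) (hc0 : 0 ≤ c) (hc1 : c ≤ 1) :
    Real.exp (c * (-s)) - Real.exp (-s) ≤ 1 - c := by
  have h := convexOn_exp.2 (Set.mem_univ (-s)) (Set.mem_univ (0:ℝ))
    (show (0:ℝ) ≤ c from hc0) (show (0:ℝ) ≤ 1 - c by linarith) (show c + (1 - c) = 1 by ring)
  simp only [smul_eq_mul, mul_zero, add_zero, Real.exp_zero, mul_one] at h
  nlinarith [Real.exp_pos (-s)]

lemma pointwise (γ η t : ℝ) (hη : 0 < η) (hle : η ≤ γ) (ht : 0 ≤ t) :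
    |Real.exp (-t / γ^2) - Real.exp (-t / η^2)| ≤ 1 - η^2/γ^2 := by
  have hγ : 0 < γ := hη.trans_le hle
  have hsq : η^2 ≤ γ^2 := by nlinarith
  have h2 : t / γ^2 ≤ t / η^2 := by gcongr
  have h1 : Real.exp (-t/η^2) ≤ Real.exp (-t/γ^2) := by
    apply Real.exp_le_exp.2; rw [neg_div, neg_div]; linarith
  rw [abs_of_nonneg (by linarith)]
  have key := exp_conv (η^2/γ^2) (t/η^2) (by positivity) (by
    rw [div_le_one (by positivity)]; exact hsq)
  have e1 : (η^2/γ^2) * (-(t/η^2)) = -t / γ^2 := by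
    field_simp
  have e2 : -(t/η^2) = -t/η^2 := (neg_div _ _).symm
  rw [e1, e2] at key; exact key

lemma poly (a : ℝ) (h0 : 0 < a) (h1 : a < 1) : 1 - a ≤ (1 - a^2/2)^4 := by
  nlinarith [mul_nonneg h0.le (sq_nonneg (a-4/5)), mul_nonneg (sub_nonneg.2 h1.le) (sq_nonneg (a-4/5)),
    mul_nonneg (mul_nonneg h0.le h0.le) (sq_nonneg (a-4/5)),
    mul_nonneg (mul_nonneg (mul_nonneg h0.le h0.le) h0.le) (sq_nonneg (a-4/5)),
    mul_nonneg (mul_nonneg (mul_nonneg (mul_nonneg h0.le h0.le) h0.le) h0.le) (sq_nonneg (a-4/5)),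
    sq_nonneg (a-4/5), sq_nonneg a, sq_nonneg (a^2-1), mul_nonneg h0.le (sub_nonneg.2 h1.le)]

lemma two_sq_le (a : ℝ) (h0 : 0 < a) (h1 : a < 1) : 2 * a^2 ≤ -Real.log (1 - a) := by
  have e1 : 1 - a^2/2 ≤ Real.exp (-(a^2/2)) := by
    have := Real.add_one_le_exp (-(a^2/2)); linarith
  have e4 : Real.exp (-(2*a^2)) = (Real.exp (-(a^2/2)))^4 := by
    rw [show -(2*a^2) = ((4:ℕ):ℝ) * (-(a^2/2)) by push_cast; ring, Real.exp_nat_mul]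
  have h14 : (1 - a^2/2)^4 ≤ (Real.exp (-(a^2/2)))^4 :=
    pow_le_pow_left₀ (by nlinarith) e1 4
  have h2 : (1:ℝ) - a ≤ Real.exp (-(2*a^2)) := by
    have := poly a h0 h1; rw [e4]; linarith
  have := (Real.log_le_iff_le_exp (by linarith : (0:ℝ) < 1 - a)).2 h2
  linarith

lemma floor_lt (x y w : ℝ) (hy : 0 ≤ y) (hw : 0 < w)
    (h : ⌊x/w⌋₊ = ⌊y/w⌋₊) : x - y < w := by
  have a1 : (⌊y/w⌋₊ : ℝ) ≤ y/w := Nat.floor_le (by positivity)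
  have a2 : x/w < ⌊x/w⌋₊ + 1 := Nat.lt_floor_add_one _
  rw [h] at a2
  have hs : (x - y)/w < 1 := by rw [sub_div]; linarith
  exact (div_lt_one hw).1 hs

lemma supd_comm {α : Type*} (f g : α → ℝ) : supd f g = supd g f := by
  unfold supd; congr 1; funext p; rw [abs_sub_comm]

lemma supd_le_one_sub {ι : Type*} (D : ι → ℝ) (γ η : ℝ) (hη : 0 < η) (hle : η ≤ γ) :
    supd (fun p => Real.exp (-(D p)^2 / γ^2)) (fun p => Real.exp (-(D p)^2 / η^2))
      ≤ 1 - η^2/γ^2 := by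
  have hγ : 0 < γ := hη.trans_le hle
  have hc1 : η^2/γ^2 ≤ 1 := by
    rw [div_le_one (by positivity)]; nlinarith
  exact Real.iSup_le (fun p => pointwise γ η ((D p)^2) hη hle (sq_nonneg _)) (by linarith)

lemma same_bucket {ι : Type*} (D : ι → ℝ) (a γ η : ℝ) (hγ : 0 < γ) (hη : 0 < η) (hle : η ≤ γ)
    (ha1 : a < 1)
    (hlog : 2 * Real.log γ - 2 * Real.log η < -Real.log (1 - a)) :
    supd (fun p => Real.exp (-(D p)^2 / γ^2)) (fun p => Real.exp (-(D p)^2 / η^2)) ≤ a := by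
  refine le_trans (supd_le_one_sub D γ η hη hle) ?_
  have h1 : Real.log (1-a) < Real.log (η^2/γ^2) := by
    rw [Real.log_div (by positivity) (by positivity), Real.log_pow, Real.log_pow]
    push_cast; linarith
  have h2 : (1:ℝ) - a < η^2/γ^2 := by
    have h3 := Real.exp_lt_exp.2 h1
    rwa [Real.exp_log (by linarith), Real.exp_log (by positivity)] at h3
  linarith

/-- Lemma `lCoverNum`: with
`f_γ(x₁,x₂) = exp(−‖x₁−x₂‖₂²/γ²)` on `S ⊆ ℝ^d`:
(i) for all `γ ≥ η > 0`, `‖f_γ − f_η‖_∞ ≤ (γ² − η²)^{1/2} / γ`;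
(ii) for `v ≥ u > 0`, `Γ ⊆ [u,v]` non-empty, `ℒ = {f_γ : γ ∈ Γ} ∪ {0}`, and
`a ∈ (0,1)`: `N(a, ℒ, ‖·‖_∞) ≤ log(v/u)/a² + 2`;
(iii) for `a ≥ 1`: `N(a, ℒ, ‖·‖_∞) = 1`. -/
theorem stmt_14 {d : ℕ} (S : Set (EuclideanSpace ℝ (Fin d))) :
    (∀ γ η : ℝ, 0 < η → η ≤ γ →
      supd (fun p : ↥S × ↥S => Real.exp (-(dist p.1 p.2) ^ 2 / γ ^ 2))
          (fun p : ↥S × ↥S => Real.exp (-(dist p.1 p.2) ^ 2 / η ^ 2)) ≤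
        Real.sqrt (γ ^ 2 - η ^ 2) / γ) ∧
    ∀ u v : ℝ, 0 < u → u ≤ v → ∀ Γ : Set ℝ, Γ.Nonempty → Γ ⊆ Set.Icc u v →
      ∀ L : Set (↥S × ↥S → ℝ),
        L = (fun γ : ℝ => fun p : ↥S × ↥S =>
          Real.exp (-(dist p.1 p.2) ^ 2 / γ ^ 2)) '' Γ ∪ {0} →
        (∀ a : ℝ, 0 < a → a < 1 →
          (coverNum supd a L : ℝ) ≤ Real.log (v / u) / a ^ 2 + 2) ∧
        (∀ a : ℝ, 1 ≤ a → coverNum supd a L = 1) := by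
  classical
  constructor
  · -- part (i)
    intro γ η hη hle
    have hγ : 0 < γ := hη.trans_le hle
    have h1 := supd_le_one_sub (fun p : ↥S × ↥S => dist p.1 p.2) γ η hη hle
    have hD : 0 ≤ γ^2 - η^2 := by nlinarith
    have hs2 : Real.sqrt (γ^2-η^2) ^ 2 = γ^2 - η^2 := Real.sq_sqrt hD
    have hsle : Real.sqrt (γ^2-η^2) ≤ γ :=
      le_trans (Real.sqrt_le_sqrt (by nlinarith)) (le_of_eq (Real.sqrt_sq hγ.le))
    have h2 : 1 - η^2/γ^2 ≤ Real.sqrt (γ^2-η^2)/γ := by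
      rw [show 1 - η^2/γ^2 = (γ^2-η^2)/γ^2 by field_simp,
        div_le_div_iff₀ (by positivity) hγ]
      nlinarith [Real.sqrt_nonneg (γ^2-η^2),
        mul_le_mul_of_nonneg_right hsle (mul_nonneg (Real.sqrt_nonneg (γ^2-η^2)) hγ.le)]
    exact le_trans h1 h2
  intro u v hu huv Γ hΓne hΓsub L hL
  set fG : ℝ → (↥S × ↥S → ℝ) := fun γ : ℝ => fun p : ↥S × ↥S =>
    Real.exp (-(dist p.1 p.2) ^ 2 / γ ^ 2) with hfG
  have h0L : (0 : ↥S × ↥S → ℝ) ∈ L := by rw [hL]; exact Set.mem_union_right _ rfl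
  have hsupd00 : ∀ b : ℝ, 0 ≤ b → supd (0 : ↥S × ↥S → ℝ) 0 ≤ b := by
    intro b hb
    exact Real.iSup_le (fun p => by simpa using hb) hb
  constructor
  · -- part (ii)
    intro a ha0 ha1
    set w := -Real.log (1 - a) with hw
    have hw0 : 0 < w := by
      have : Real.log (1 - a) < 0 := Real.log_neg (by linarith) (by linarith)
      simp only [hw]; linarith
    have hwa : 2 * a^2 ≤ w := two_sq_le a ha0 ha1
    set X := 2 * Real.log (v/u) with hX
    have hX0 : 0 ≤ X := by
      have h1 : (1:ℝ) ≤ v/u := (one_le_div hu).2 huv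
      have := Real.log_nonneg h1
      simp only [hX]; linarith
    set n := ⌊X / w⌋₊ + 1 with hn
    set bkt : ℝ → ℕ := fun γ => ⌊(2 * (Real.log γ - Real.log u)) / w⌋₊ with hbkt
    set rep : ℕ → (↥S × ↥S → ℝ) :=
      fun k => if h : ∃ γ, γ ∈ Γ ∧ bkt γ = k then fG h.choose else 0 with hrep
    set F : Finset (↥S × ↥S → ℝ) := insert 0 ((Finset.range n).image rep) with hF
    -- positivity facts for members of Γ
    have hΓpos : ∀ γ ∈ Γ, 0 < γ := fun γ hγ => hu.trans_le (hΓsub hγ).1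
    have hbkt_lt : ∀ γ ∈ Γ, bkt γ < n := by
      intro γ hγ
      have h1 : 2 * (Real.log γ - Real.log u) ≤ X := by
        have := Real.log_le_log (hΓpos γ hγ) (hΓsub hγ).2
        rw [hX, Real.log_div (by linarith [hu, huv] : v ≠ 0) hu.ne']
        linarith
      have h2 : bkt γ ≤ ⌊X / w⌋₊ := Nat.floor_mono (by gcongr)
      omega
    have hsub : ↑F ⊆ L := by
      intro x hx
      simp only [hF, Finset.coe_insert, Set.mem_insert_iff, Finset.coe_image,
        Set.mem_image, Finset.mem_coe, Finset.mem_range] at hx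
      rcases hx with rfl | ⟨k, _, rfl⟩
      · exact h0L
      · show (if h : ∃ γ, γ ∈ Γ ∧ bkt γ = k then fG h.choose else 0) ∈ L
        split
        · next h =>
            rw [hL]
            exact Set.mem_union_left _ ⟨h.choose, h.choose_spec.1, rfl⟩
        · exact h0L
    have hcov : ∀ x ∈ L, ∃ y ∈ F, supd x y ≤ a := by
      intro x hx
      rw [hL] at hx
      rcases hx with ⟨γ, hγΓ, rfl⟩ | hx0
      · have hex : ∃ γ', γ' ∈ Γ ∧ bkt γ' = bkt γ := ⟨γ, hγΓ, rfl⟩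
        refine ⟨rep (bkt γ), ?_, ?_⟩
        · exact Finset.mem_insert_of_mem (Finset.mem_image.2
            ⟨bkt γ, Finset.mem_range.2 (hbkt_lt γ hγΓ), rfl⟩)
        · show supd (fG γ) (if h : ∃ γ', γ' ∈ Γ ∧ bkt γ' = bkt γ then fG h.choose else 0) ≤ a
          rw [dif_pos hex]
          obtain ⟨hγ'Γ, hbeq⟩ := hex.choose_spec
          set γ' := hex.choose
          have hγpos := hΓpos γ hγΓ
          have hγ'pos := hΓpos γ' hγ'Γ
          have hnn : ∀ δ, δ ∈ Γ → 0 ≤ 2 * (Real.log δ - Real.log u) := by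
            intro δ hδ
            have := Real.log_le_log hu (hΓsub hδ).1
            linarith
          rcases le_total γ' γ with hle | hle
          · have hdiff : 2 * (Real.log γ - Real.log u) - 2 * (Real.log γ' - Real.log u) < w :=
              floor_lt _ _ _ (hnn γ' hγ'Γ) hw0 hbeq.symm
            exact same_bucket (fun p : ↥S × ↥S => dist p.1 p.2) a γ γ'
              hγpos hγ'pos hle ha1 (by rw [hw] at hdiff; linarith)
          · rw [supd_comm]
            have hdiff : 2 * (Real.log γ' - Real.log u) - 2 * (Real.log γ - Real.log u) < w :=
              floor_lt _ _ _ (hnn γ hγΓ) hw0 hbeq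
            exact same_bucket (fun p : ↥S × ↥S => dist p.1 p.2) a γ' γ
              hγ'pos hγpos hle ha1 (by rw [hw] at hdiff; linarith)
      · rcases hx0 with rfl
        exact ⟨0, Finset.mem_insert_self _ _, hsupd00 a ha0.le⟩
    have h1 : coverNum supd a L ≤ F.card := Nat.sInf_le ⟨F, rfl, hsub, hcov⟩
    have h2 : F.card ≤ n + 1 := by
      refine le_trans (Finset.card_insert_le _ _) ?_
      have := Finset.card_image_le (s := Finset.range n) (f := rep)
      simp only [Finset.card_range] at this
      omega
    have h3 : (n : ℝ) ≤ X / w + 1 := by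
      have := Nat.floor_le (div_nonneg hX0 hw0.le)
      rw [hn]; push_cast; linarith
    have h4 : X / w ≤ Real.log (v/u) / a^2 := by
      rw [div_le_div_iff₀ hw0 (by positivity)]
      have hlvu : 0 ≤ Real.log (v/u) := Real.log_nonneg ((one_le_div hu).2 huv)
      rw [hX]; nlinarith
    calc (coverNum supd a L : ℝ) ≤ (n : ℝ) + 1 := by exact_mod_cast h1.trans h2
      _ ≤ Real.log (v/u) / a^2 + 2 := by linarith
  · -- part (iii)
    intro a ha
    have hsup1 : ∀ x ∈ L, supd x 0 ≤ a := by
      intro x hx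
      rw [hL] at hx
      rcases hx with ⟨γ, hγΓ, rfl⟩ | hx0
      · have hγ0 : 0 < γ := hu.trans_le (hΓsub hγΓ).1
        refine Real.iSup_le (fun p => ?_) (by linarith)
        simp only [Pi.zero_apply, sub_zero]
        rw [abs_of_nonneg (Real.exp_pos _).le]
        have hz : -(dist p.1 p.2) ^ 2 / γ ^ 2 ≤ 0 := by
          rw [neg_div]
          have : 0 ≤ (dist p.1 p.2)^2 / γ^2 := by positivity
          linarith
        calc Real.exp (-(dist p.1 p.2) ^ 2 / γ ^ 2) ≤ Real.exp 0 := Real.exp_le_exp.2 hz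
          _ = 1 := Real.exp_zero
          _ ≤ a := ha
      · rcases hx0 with rfl
        exact hsupd00 a (by linarith)
    have hmem1 : 1 ∈ {m : ℕ | ∃ F : Finset (↥S × ↥S → ℝ), F.card = m ∧ ↑F ⊆ L ∧
        ∀ x ∈ L, ∃ y ∈ F, supd x y ≤ a} :=
      ⟨{0}, Finset.card_singleton _, by simpa using h0L,
        fun x hx => ⟨0, Finset.mem_singleton_self _, hsup1 x hx⟩⟩
    have hle1 : coverNum supd a L ≤ 1 := Nat.sInf_le hmem1
    have hne : coverNum supd a L ≠ 0 := by
      intro h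
      rcases Nat.sInf_eq_zero.1 h with h0 | hemp
      · obtain ⟨F, hc, _, hcov⟩ := h0
        obtain ⟨y, hy, _⟩ := hcov 0 h0L
        rw [Finset.card_eq_zero] at hc
        subst hc
        exact absurd hy (Finset.notMem_empty _)
      · rw [Set.eq_empty_iff_forall_notMem] at hemp
        exact hemp 1 hmem1
    omega
end

section
/- Let S ⊆ ℝ^d, v ≥ u > 0, Γ ⊆ [u, v] non-empty, f_γ(x₁, x₂) = exp(−‖x₁ − x₂‖₂² / γ²), and ℒ = { f_γ : γ ∈ Γ } ∪ {0}. Then ∫₀^{1/2} log N(a, ℒ, ‖·‖_∞) da ≤ log(2 + 4 log(v/u)) / 2 + 1. -/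
/-!
In the variable `t = log γ` the map `t ↦ f_γ` is `2`-Lipschitz for the sup distance, because
`t ↦ exp (-x * exp t)` is `1`-Lipschitz for `x ≥ 0` (its derivative is `-y e^{-y}` with `y ≥ 0`).
Covering `[log u, log v]` by intervals of length `a / 2` therefore gives
`N(a) ≤ 2 log (v/u) / a + 2 ≤ (1 + 2 log (v/u)) / a` for `a ≤ 1/2`, and integrating the
logarithm of this bound over `(0, 1/2]` gives the claim.
-/

open Real MeasureTheory

lemma lipschitzWith_exp_neg_mul_exp {x : ℝ} (hx : 0 ≤ x) :
    LipschitzWith 1 (fun t => exp (-x * exp t)) := by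
  have hderiv : ∀ t, HasDerivAt (fun t => exp (-x * exp t))
      (exp (-x * exp t) * (-x * exp t)) t :=
    fun t => ((hasDerivAt_exp t).const_mul (-x)).exp
  refine lipschitzWith_of_nnnorm_deriv_le (fun t => (hderiv t).differentiableAt) fun t => ?_
  rw [(hderiv t).deriv, ← NNReal.coe_le_coe, coe_nnnorm, NNReal.coe_one, norm_eq_abs]
  have hy : 0 ≤ x * exp t := mul_nonneg hx (exp_pos t).le
  calc |exp (-x * exp t) * (-x * exp t)| = x * exp t * exp (-(x * exp t)) := by
        rw [abs_mul, abs_of_pos (exp_pos _), neg_mul, abs_neg, abs_of_nonneg hy, mul_comm]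
    _ ≤ exp (-1) := mul_exp_neg_le_exp_neg_one _
    _ ≤ 1 := exp_le_one_iff.2 (by norm_num)

lemma abs_exp_neg_div_sq_sub_le {x γ γ' : ℝ} (hx : 0 ≤ x) (hγ : 0 < γ) (hγ' : 0 < γ') :
    |exp (-x / γ ^ 2) - exp (-x / γ' ^ 2)| ≤ 2 * |log γ - log γ'| := by
  have hscale : ∀ g : ℝ, 0 < g → -x / g ^ 2 = -x * exp (-2 * log g) := by
    intro g hg
    rw [div_eq_mul_inv, ← exp_log (pow_pos hg 2), ← exp_neg, log_pow]
    push_cast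
    ring_nf
  have h := (lipschitzWith_exp_neg_mul_exp hx).dist_le_mul (-2 * log γ) (-2 * log γ')
  rw [← hscale γ hγ, ← hscale γ' hγ', dist_eq_norm, dist_eq_norm, norm_eq_abs, norm_eq_abs]
    at h
  calc _ ≤ _ := h
    _ = 2 * |log γ - log γ'| := by
      rw [NNReal.coe_one, one_mul, ← mul_sub, abs_mul]
      norm_num

lemma supd_le {α : Type*} {f g : α → ℝ} {c : ℝ} (hc : 0 ≤ c) (h : ∀ p, |f p - g p| ≤ c) :
    supd f g ≤ c :=
  Real.iSup_le h hc

lemma supd_exp_neg_div_sq_le {α : Type*} {q : α → ℝ} (hq : ∀ p, 0 ≤ q p) {γ γ' : ℝ}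
    (hγ : 0 < γ) (hγ' : 0 < γ') :
    supd (fun p => exp (-q p / γ ^ 2)) (fun p => exp (-q p / γ' ^ 2)) ≤
      2 * |log γ - log γ'| :=
  supd_le (by positivity) fun p => abs_exp_neg_div_sq_sub_le (hq p) hγ hγ'

lemma coverNum_le_card {α : Type*} {dd : α → α → ℝ} {a : ℝ} {L : Set α} {F : Finset α}
    (hFL : ↑F ⊆ L) (hF : ∀ x ∈ L, ∃ y ∈ F, dd x y ≤ a) : coverNum dd a L ≤ F.card :=
  Nat.sInf_le ⟨F, rfl, hFL, hF⟩

lemma coverNum_pos {α : Type*} {dd : α → α → ℝ} {a : ℝ} {L : Set α} {F : Finset α}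
    (hL : L.Nonempty) (hFL : ↑F ⊆ L) (hF : ∀ x ∈ L, ∃ y ∈ F, dd x y ≤ a) :
    0 < coverNum dd a L := by
  have hmin : coverNum dd a L ∈
      {m : ℕ | ∃ F : Finset α, F.card = m ∧ ↑F ⊆ L ∧ ∀ x ∈ L, ∃ y ∈ F, dd x y ≤ a} :=
    Nat.sInf_mem ⟨F.card, F, rfl, hFL, hF⟩
  obtain ⟨F', hcard, -, hcov⟩ := hmin
  obtain ⟨x, hx⟩ := hL
  obtain ⟨y, hy, -⟩ := hcov x hx
  rw [← hcard]
  exact Finset.card_pos.2 ⟨y, hy⟩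

/-- Points of `T` falling in the same one of the `⌊(hi - lo) / δ⌋₊ + 1` buckets
`[lo + kδ, lo + (k+1)δ)` share a representative. -/
lemma exists_finset_forall_abs_sub_le {X : Type*} [Nonempty X] (φ : X → ℝ) {T : Set X} {lo hi δ : ℝ}
    (hδ : 0 < δ) (hT : ∀ t ∈ T, φ t ∈ Set.Icc lo hi) :
    ∃ R : Finset X, ↑R ⊆ T ∧ R.card ≤ ⌊(hi - lo) / δ⌋₊ + 1 ∧
      ∀ t ∈ T, ∃ r ∈ R, |φ t - φ r| ≤ δ := by
  classical
  set bucket : X → ℕ := fun t => ⌊(φ t - lo) / δ⌋₊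
  have hbucket_nonneg : ∀ t ∈ T, 0 ≤ (φ t - lo) / δ := fun t ht =>
    div_nonneg (sub_nonneg.2 (hT t ht).1) hδ.le
  refine ⟨((Finset.range (⌊(hi - lo) / δ⌋₊ + 1)).filter (· ∈ bucket '' T)).image
    (Function.invFunOn bucket T), ?_, ?_, ?_⟩
  · intro r hr
    obtain ⟨k, hk, rfl⟩ := Finset.mem_image.1 hr
    exact Function.invFunOn_mem (Finset.mem_filter.1 hk).2
  · exact Finset.card_image_le.trans ((Finset.card_filter_le _ _).trans (Finset.card_range _).le)
  · intro t ht
    have hex : ∃ s ∈ T, bucket s = bucket t := ⟨t, ht, rfl⟩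
    set r := Function.invFunOn bucket T (bucket t)
    have hr : r ∈ T := Function.invFunOn_mem hex
    have hrt : bucket r = bucket t := Function.invFunOn_eq hex
    refine ⟨r, Finset.mem_image.2 ⟨bucket t, Finset.mem_filter.2
      ⟨Finset.mem_range.2 (Nat.lt_succ_of_le (Nat.floor_mono ?_)), t, ht, rfl⟩, rfl⟩, ?_⟩
    · exact div_le_div_of_nonneg_right (by linarith [(hT t ht).2]) hδ.le
    have hfloor : ⌊(φ t - lo) / δ⌋ = ⌊(φ r - lo) / δ⌋ := by
      rw [← Int.natCast_floor_eq_floor (hbucket_nonneg t ht),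
        ← Int.natCast_floor_eq_floor (hbucket_nonneg r hr)]
      exact_mod_cast hrt.symm
    have h := (Int.abs_sub_lt_one_of_floor_eq_floor hfloor).le
    rwa [← sub_div, sub_sub_sub_cancel_right, abs_div, abs_of_pos hδ, div_le_one hδ] at h

lemma exists_finset_cover_exp_neg_div_sq {α : Type*} {q : α → ℝ} (hq : ∀ p, 0 ≤ q p)
    {u v : ℝ} (hu : 0 < u) (huv : u ≤ v) {Γ : Set ℝ} (hΓuv : Γ ⊆ Set.Icc u v)
    {L : Set (α → ℝ)} (hL : L = (fun γ p => exp (-q p / γ ^ 2)) '' Γ ∪ {0})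
    {a : ℝ} (ha : 0 < a) :
    ∃ F : Finset (α → ℝ), ↑F ⊆ L ∧ (∀ x ∈ L, ∃ y ∈ F, supd x y ≤ a) ∧
      (F.card : ℝ) ≤ 2 * log (v / u) / a + 2 := by
  classical
  have hΓpos : ∀ γ ∈ Γ, 0 < γ := fun γ hγ => hu.trans_le (hΓuv hγ).1
  obtain ⟨R, hRΓ, hRcard, hR⟩ := exists_finset_forall_abs_sub_le log (half_pos ha)
    (lo := log u) (hi := log v) fun γ hγ =>
      ⟨log_le_log hu (hΓuv hγ).1, log_le_log (hΓpos γ hγ) (hΓuv hγ).2⟩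
  refine ⟨insert 0 (R.image fun γ p => exp (-q p / γ ^ 2)), ?_, ?_, ?_⟩
  · rw [Finset.coe_insert, Finset.coe_image, hL, Set.insert_subset_iff]
    exact ⟨Or.inr rfl, Set.subset_union_of_subset_left (Set.image_mono hRΓ) _⟩
  · rw [hL]
    rintro x (⟨γ, hγ, rfl⟩ | rfl)
    · obtain ⟨r, hr, hγr⟩ := hR γ hγ
      refine ⟨_, Finset.mem_insert_of_mem (Finset.mem_image_of_mem _ hr), ?_⟩
      calc _ ≤ 2 * |log γ - log r| :=
            supd_exp_neg_div_sq_le hq (hΓpos γ hγ) (hΓpos r (hRΓ hr))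
        _ ≤ a := by linarith
    · exact ⟨0, Finset.mem_insert_self _ _, supd_le ha.le fun p => by simp [ha.le]⟩
  · have hlog : 0 ≤ log v - log u := sub_nonneg.2 (log_le_log hu huv)
    calc (_ : ℝ) ≤ (R.card : ℝ) + 1 := by
          exact_mod_cast (Finset.card_insert_le _ _).trans (Nat.succ_le_succ Finset.card_image_le)
      _ ≤ ((⌊(log v - log u) / (a / 2)⌋₊ : ℕ) : ℝ) + 1 + 1 := by
          gcongr; exact_mod_cast hRcard
      _ ≤ (log v - log u) / (a / 2) + 1 + 1 := by gcongr; exact Nat.floor_le (by positivity)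
      _ = 2 * log (v / u) / a + 2 := by
          rw [log_div (hu.trans_le huv).ne' hu.ne']; ring

lemma integral_log_le_of_le_div {g : ℝ → ℝ} {K b : ℝ} (hb : 0 < b)
    (hg : ∀ a ∈ Set.Ioc 0 b, 1 ≤ g a ∧ g a ≤ K / a) :
    ∫ a in 0..b, log (g a) ≤ b * (log (K / b) + 1) := by
  have hK : 0 < K := by
    obtain ⟨h1, h2⟩ := hg b ⟨hb, le_rfl⟩
    exact (div_pos_iff_of_pos_right hb).1 (one_pos.trans_le (h1.trans h2))
  have hmajorant : IntervalIntegrable (fun a => log K - log a) volume 0 b :=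
    intervalIntegrable_const.sub intervalIntegral.intervalIntegrable_log'
  have hint : ∫ a in 0..b, (log K - log a) = b * (log (K / b) + 1) := by
    rw [intervalIntegral.integral_sub intervalIntegrable_const intervalIntegral.intervalIntegrable_log',
      intervalIntegral.integral_const, integral_log, log_div hK.ne' hb.ne']
    simp only [sub_zero, smul_eq_mul, zero_mul, add_zero]
    ring
  rw [← hint, intervalIntegral.integral_of_le hb.le, intervalIntegral.integral_of_le hb.le]
  refine integral_mono_of_nonneg ?_ hmajorant.1 ?_
  · filter_upwards [ae_restrict_mem measurableSet_Ioc] with a ha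
    exact log_nonneg (hg a ha).1
  · filter_upwards [ae_restrict_mem measurableSet_Ioc] with a ha
    obtain ⟨h1, h2⟩ := hg a ha
    calc log (g a) ≤ log (K / a) := log_le_log (by linarith) h2
      _ = log K - log a := log_div hK.ne' ha.1.ne'

theorem stmt_15_general {d : ℕ} (S : Set (EuclideanSpace ℝ (Fin d)))
    (u v : ℝ) (hu : 0 < u) (huv : u ≤ v)
    (Γ : Set ℝ) (hΓuv : Γ ⊆ Set.Icc u v)
    (L : Set (↥S × ↥S → ℝ))
    (hL : L = (fun γ : ℝ => fun p : ↥S × ↥S =>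
      Real.exp (-(dist p.1 p.2) ^ 2 / γ ^ 2)) '' Γ ∪ {0}) :
    (∫ a in (0 : ℝ)..(1 / 2 : ℝ), Real.log (coverNum supd a L : ℝ)) ≤
      Real.log (2 + 4 * Real.log (v / u)) / 2 + 1 := by
  have hcover : ∀ a ∈ Set.Ioc (0 : ℝ) (1 / 2),
      1 ≤ (coverNum supd a L : ℝ) ∧ (coverNum supd a L : ℝ) ≤ (1 + 2 * log (v / u)) / a := by
    rintro a ⟨ha, ha'⟩
    obtain ⟨F, hFL, hF, hcard⟩ := exists_finset_cover_exp_neg_div_sq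
      (fun p : ↥S × ↥S => sq_nonneg (dist p.1 p.2)) hu huv hΓuv hL ha
    refine ⟨by exact_mod_cast coverNum_pos ⟨0, by simp [hL]⟩ hFL hF, ?_⟩
    have htwo : 2 ≤ 1 / a := by rw [le_div_iff₀ ha]; linarith
    calc (coverNum supd a L : ℝ) ≤ F.card := by exact_mod_cast coverNum_le_card hFL hF
      _ ≤ 2 * log (v / u) / a + 2 := hcard
      _ ≤ (1 + 2 * log (v / u)) / a := by rw [add_div]; linarith
  calc _ ≤ 1 / 2 * (log ((1 + 2 * log (v / u)) / (1 / 2)) + 1) :=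
        integral_log_le_of_le_div (by norm_num) hcover
    _ ≤ _ := by
      rw [show (1 + 2 * log (v / u)) / (1 / 2) = 2 + 4 * log (v / u) by ring]
      linarith

/-- Lemma `lCoverInt`: for `S ⊆ ℝ^d`, `v ≥ u > 0`,
`Γ ⊆ [u,v]` non-empty, `f_γ(x₁,x₂) = exp(−‖x₁−x₂‖₂²/γ²)` and
`ℒ = {f_γ : γ ∈ Γ} ∪ {0}`:
`∫₀^{1/2} log N(a, ℒ, ‖·‖_∞) da ≤ log(2 + 4 log(v/u))/2 + 1`. -/
theorem stmt_15 {d : ℕ} (S : Set (EuclideanSpace ℝ (Fin d)))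
    (u v : ℝ) (hu : 0 < u) (huv : u ≤ v)
    (Γ : Set ℝ) (hΓne : Γ.Nonempty) (hΓuv : Γ ⊆ Set.Icc u v)
    (L : Set (↥S × ↥S → ℝ))
    (hL : L = (fun γ : ℝ => fun p : ↥S × ↥S =>
      Real.exp (-(dist p.1 p.2) ^ 2 / γ ^ 2)) '' Γ ∪ {0}) :
    (∫ a in (0 : ℝ)..(1 / 2 : ℝ), Real.log (coverNum supd a L : ℝ)) ≤
      Real.log (2 + 4 * Real.log (v / u)) / 2 + 1 :=
  stmt_15_general S u v hu huv Γ hΓuv L hL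
end
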